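/- Let P_1,…,P_n and Q_1,…,Q_n be convex polytopes in ℝ^n with P_i ⊆ Q_i for every i. For a nonzero vector u ∈ ℝ^n define B_{i,u} = { x ∈ Q_i : ⟨u,x⟩ ≥ h_{P_i}(u) }, and for u ∈ S^{n−1} let T_u = { i : P_i ∩ Q_i^u ≠ ∅ }. Then there exists a nonzero u ∈ ℝ^n such that {B_{1,u},…,B_{n,u}} is essential if and only if there exists u ∈ S^{n−1} such that the collection consisting of Q_i^u for i ∈ T_u together with Q_i for i ∉ T_u is essential. -/

import Mathlib

open Pointwise MeasureTheory RealInnerProductSpace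

attribute [local instance] Classical.propDecidable

noncomputable section

/-- `ℝ^n` with the standard inner product. -/
abbrev E (n : ℕ) : Type := EuclideanSpace ℝ (Fin n)

/-- A convex polytope: the convex hull of a nonempty finite set of points. -/
def IsPolytope {n : ℕ} (P : Set (E n)) : Prop :=
  ∃ S : Finset (E n), S.Nonempty ∧ P = convexHull ℝ (S : Set (E n))

/-- The mixed volume of `n` convex bodies in `ℝ^n`, via inclusion–exclusion. -/
def mixedVolume (n : ℕ) (K : Fin n → Set (E n)) : ℝ :=
  ((n.factorial : ℝ))⁻¹ *
    ∑ I ∈ Finset.univ.powerset.filter (fun I : Finset (Fin n) => I.Nonempty),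
      (-1 : ℝ) ^ (n + I.card) * (volume (∑ i ∈ I, K i)).toReal

/-- The support function of a set `K ⊆ ℝ^n`. -/
def suppFn {n : ℕ} (K : Set (E n)) (u : E n) : ℝ :=
  sSup ((fun x => ⟪u, x⟫) '' K)

/-- The face of `K` in direction `u`. -/
def faceOf {n : ℕ} (K : Set (E n)) (u : E n) : Set (E n) :=
  {x ∈ K | ⟪u, x⟫ = suppFn K u}

/-- The dimension of a convex set: the dimension of its affine hull. -/
def setDim {V : Type*} [AddCommGroup V] [Module ℝ V] (s : Set V) : ℕ :=
  Module.finrank ℝ (affineSpan ℝ s).direction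

/-- A collection of sets in `ℝ^n` is essential if for every nonempty subcollection of
size at most `n` the Minkowski sum has dimension at least the size of the subcollection. -/
def IsEssential {n : ℕ} {ι : Type*} [Fintype ι] (K : ι → Set (E n)) : Prop :=
  ∀ I : Finset ι, I.Nonempty → I.card ≤ n → I.card ≤ setDim (∑ i ∈ I, K i)

/-! Scaling `u` by a positive factor does not change the sets `B_{i,u}`, so only the direction of
`u` matters. For fixed `u`, essentiality of a family of nonempty sets depends only on the linear
spans of their difference sets, because the span of a Minkowski sum is the sum of the spans. If
`P_i` touches `Q_i^u` then `h_{P_i}(u) = h_{Q_i}(u)` and `B_{i,u} = Q_i^u`. Otherwise `B_{i,u}`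
contains the intersection of `Q_i` with an open half-space meeting `Q_i^u`, and such a relatively
open piece of the convex set `Q_i` has the same affine hull as `Q_i`. -/

open Topology

section VectorSpan

variable {k V : Type*} [Ring k] [AddCommGroup V] [Module k V]

theorem vectorSpan_add {s t : Set V} (hs : s.Nonempty) (ht : t.Nonempty) :
    vectorSpan k (s + t) = vectorSpan k s ⊔ vectorSpan k t := by
  obtain ⟨a, ha⟩ := hs
  obtain ⟨b, hb⟩ := ht
  refine le_antisymm ?_ (sup_le ?_ ?_)
  · rw [vectorSpan_def, Submodule.span_le]
    rintro _ ⟨_, ⟨x, hx, y, hy, rfl⟩, _, ⟨x', hx', y', hy', rfl⟩, rfl⟩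
    simp only [vsub_eq_sub, add_sub_add_comm, SetLike.mem_coe]
    exact Submodule.add_mem_sup (vsub_mem_vectorSpan k hx hx') (vsub_mem_vectorSpan k hy hy')
  · rw [← vectorSpan_vadd k s b, add_comm]
    exact vectorSpan_mono k (Set.vadd_set_subset_add hb)
  · rw [← vectorSpan_vadd k t a]
    exact vectorSpan_mono k (Set.vadd_set_subset_add ha)

theorem vectorSpan_finset_sum {ι : Type*} (I : Finset ι) {K : ι → Set V}
    (hK : ∀ i ∈ I, (K i).Nonempty) :
    vectorSpan k (∑ i ∈ I, K i) = ⨆ i ∈ I, vectorSpan k (K i) := by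
  induction I using Finset.induction_on with
  | empty => simp [← Set.singleton_zero]
  | @insert a I ha ih =>
    have hsum : (∑ i ∈ I, K i).Nonempty := by
      choose! g hg using hK
      exact ⟨_, Set.finsetSum_mem_finsetSum I K g fun i hi =>
        hg i (Finset.mem_insert_of_mem hi)⟩
    rw [Finset.sum_insert ha, vectorSpan_add (hK a (I.mem_insert_self a)) hsum,
      ih fun i hi => hK i (Finset.mem_insert_of_mem hi), Finset.iSup_insert]

end VectorSpan

theorem Convex.vectorSpan_inter_isOpen {V : Type*} [AddCommGroup V] [Module ℝ V]
    [TopologicalSpace V] [ContinuousAdd V] [ContinuousSMul ℝ V] {s t : Set V}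
    (hs : Convex ℝ s) (ht : IsOpen t) (hst : (s ∩ t).Nonempty) :
    vectorSpan ℝ (s ∩ t) = vectorSpan ℝ s := by
  obtain ⟨y, hys, hyt⟩ := hst
  refine le_antisymm (vectorSpan_mono ℝ Set.inter_subset_left) ?_
  rw [vectorSpan_eq_span_vsub_set_right ℝ hys, Submodule.span_le]
  rintro _ ⟨z, hz, rfl⟩
  show z -ᵥ y ∈ vectorSpan ℝ (s ∩ t)
  have hcont : Continuous fun ε : ℝ => y + ε • (z - y) := by fun_prop
  have hnear : ∀ᶠ ε in 𝓝[>] (0 : ℝ), y + ε • (z - y) ∈ t ∧ ε ∈ Set.Ioc 0 1 :=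
    Filter.Eventually.and
      (nhdsWithin_le_nhds (hcont.continuousAt.preimage_mem_nhds (by simpa using ht.mem_nhds hyt)))
      (Ioc_mem_nhdsGT zero_lt_one)
  obtain ⟨ε, hεt, hε0, hε1⟩ := hnear.exists
  have hεs : y + ε • (z - y) ∈ s := hs.add_smul_sub_mem hys hz ⟨hε0.le, hε1⟩
  have hzy : z -ᵥ y = ε⁻¹ • ((y + ε • (z - y)) -ᵥ y) := by
    rw [vsub_eq_sub, vsub_eq_sub, add_sub_cancel_left, inv_smul_smul₀ hε0.ne']
  rw [hzy]
  exact Submodule.smul_mem _ _ (vsub_mem_vectorSpan ℝ ⟨hεs, hεt⟩ ⟨hys, hyt⟩)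

namespace IsPolytope

variable {n : ℕ} {P : Set (E n)}

theorem nonempty (h : IsPolytope P) : P.Nonempty := by
  obtain ⟨S, hS, rfl⟩ := h
  exact (Finset.coe_nonempty.2 hS).mono (subset_convexHull ℝ _)

theorem isCompact (h : IsPolytope P) : IsCompact P := by
  obtain ⟨S, -, rfl⟩ := h
  exact S.finite_toSet.isCompact_convexHull ℝ

theorem convex (h : IsPolytope P) : Convex ℝ P := by
  obtain ⟨S, -, rfl⟩ := h
  exact convex_convexHull ℝ _

end IsPolytope

section SupportFunction

variable {n : ℕ} {K P Q : Set (E n)} {u x : E n}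

theorem bddAbove_inner_image (hK : IsCompact K) (u : E n) :
    BddAbove ((fun x => ⟪u, x⟫) '' K) :=
  hK.bddAbove_image (by fun_prop)

theorem inner_le_suppFn (hK : IsCompact K) (hx : x ∈ K) : ⟪u, x⟫ ≤ suppFn K u :=
  le_csSup (bddAbove_inner_image hK u) ⟨x, hx, rfl⟩

theorem suppFn_mono (hQ : IsCompact Q) (hP : P.Nonempty) (hPQ : P ⊆ Q) :
    suppFn P u ≤ suppFn Q u :=
  csSup_le_csSup (bddAbove_inner_image hQ u) (hP.image _) (Set.image_mono hPQ)

theorem suppFn_smul (K : Set (E n)) (u : E n) {c : ℝ} (hc : 0 ≤ c) :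
    suppFn K (c • u) = c * suppFn K u := by
  have himage : (fun x => ⟪c • u, x⟫) '' K = c • (fun x => ⟪u, x⟫) '' K := by
    rw [← Set.image_smul, Set.image_image]
    simp only [real_inner_smul_left, smul_eq_mul]
  rw [suppFn, himage, Real.sSup_smul_of_nonneg hc, smul_eq_mul, suppFn]

theorem faceOf_nonempty (hK : IsCompact K) (hne : K.Nonempty) (u : E n) :
    (faceOf K u).Nonempty := by
  obtain ⟨x, hxK, hmax⟩ := hK.exists_isMaxOn hne (f := fun x => ⟪u, x⟫) (by fun_prop)
  have hgreatest : IsGreatest ((fun x => ⟪u, x⟫) '' K) ⟪u, x⟫ :=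
    ⟨⟨x, hxK, rfl⟩, by rintro _ ⟨y, hy, rfl⟩; exact hmax hy⟩
  exact ⟨x, hxK, hgreatest.csSup_eq.symm⟩

end SupportFunction

section Caps

variable {n : ℕ}

/-- The paper's `B_{i,u}` is `capOf (P i) (Q i) u`. -/
def capOf (P Q : Set (E n)) (u : E n) : Set (E n) :=
  {x ∈ Q | suppFn P u ≤ ⟪u, x⟫}

def faceIfTouching (P Q : Set (E n)) (u : E n) : Set (E n) :=
  if (P ∩ faceOf Q u).Nonempty then faceOf Q u else Q

variable {P Q : Set (E n)} {u : E n}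

theorem capOf_smul (P Q : Set (E n)) (u : E n) {c : ℝ} (hc : 0 < c) :
    capOf P Q (c • u) = capOf P Q u := by
  ext x
  simp only [capOf, Set.mem_ofPred_eq, suppFn_smul P u hc.le, real_inner_smul_left,
    mul_le_mul_iff_right₀ hc]

theorem faceOf_subset_capOf (hQ : IsCompact Q) (hP : P.Nonempty) (hPQ : P ⊆ Q) :
    faceOf Q u ⊆ capOf P Q u :=
  fun _ ⟨hxQ, hx⟩ => ⟨hxQ, hx ▸ suppFn_mono hQ hP hPQ⟩

theorem capOf_eq_faceOf (hQ : IsCompact Q) (hPQ : P ⊆ Q) (htouch : (P ∩ faceOf Q u).Nonempty) :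
    capOf P Q u = faceOf Q u := by
  obtain ⟨x₀, hx₀P, -, hx₀⟩ := htouch
  have hbdd : BddAbove ((fun x => ⟪u, x⟫) '' P) :=
    (bddAbove_inner_image hQ u).mono (Set.image_mono hPQ)
  have hsupp : suppFn P u = suppFn Q u :=
    le_antisymm (suppFn_mono hQ ⟨x₀, hx₀P⟩ hPQ) (hx₀ ▸ le_csSup hbdd ⟨x₀, hx₀P, rfl⟩)
  ext x
  simp only [capOf, faceOf, Set.mem_ofPred_eq, hsupp]
  exact and_congr_right fun hx => ⟨fun h => (inner_le_suppFn hQ hx).antisymm h, fun h => h.ge⟩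

theorem suppFn_lt_of_not_touching (hP : IsCompact P) (hPne : P.Nonempty) (hQ : IsCompact Q)
    (hPQ : P ⊆ Q) (hnt : ¬(P ∩ faceOf Q u).Nonempty) : suppFn P u < suppFn Q u := by
  refine (suppFn_mono hQ hPne hPQ).lt_of_ne fun heq => hnt ?_
  obtain ⟨x, hxP, hx⟩ := faceOf_nonempty hP hPne u
  exact ⟨x, hxP, hPQ hxP, hx.trans heq⟩

theorem vectorSpan_capOf_of_not_touching (hP : IsCompact P) (hPne : P.Nonempty)
    (hQ : IsCompact Q) (hQc : Convex ℝ Q) (hPQ : P ⊆ Q) (hnt : ¬(P ∩ faceOf Q u).Nonempty) :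
    vectorSpan ℝ (capOf P Q u) = vectorSpan ℝ Q := by
  have hopen : IsOpen {x : E n | suppFn P u < ⟪u, x⟫} :=
    isOpen_lt continuous_const (by fun_prop)
  obtain ⟨y, hyQ, hy⟩ := faceOf_nonempty hQ (hPne.mono hPQ) u
  have hy_mem : y ∈ Q ∩ {x | suppFn P u < ⟪u, x⟫} :=
    ⟨hyQ, show suppFn P u < ⟪u, y⟫ from hy ▸ suppFn_lt_of_not_touching hP hPne hQ hPQ hnt⟩
  refine le_antisymm (vectorSpan_mono ℝ (Set.sep_subset _ _)) ?_
  rw [← hQc.vectorSpan_inter_isOpen hopen ⟨y, hy_mem⟩]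
  exact vectorSpan_mono ℝ fun x ⟨hxQ, hx⟩ => ⟨hxQ, hx.le⟩

theorem vectorSpan_capOf (hP : IsCompact P) (hPne : P.Nonempty) (hQ : IsCompact Q)
    (hQc : Convex ℝ Q) (hPQ : P ⊆ Q) :
    vectorSpan ℝ (capOf P Q u) = vectorSpan ℝ (faceIfTouching P Q u) := by
  unfold faceIfTouching
  split_ifs with htouch
  · rw [capOf_eq_faceOf hQ hPQ htouch]
  · exact vectorSpan_capOf_of_not_touching hP hPne hQ hQc hPQ htouch

theorem capOf_nonempty (hQ : IsCompact Q) (hPne : P.Nonempty) (hPQ : P ⊆ Q) :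
    (capOf P Q u).Nonempty :=
  (faceOf_nonempty hQ (hPne.mono hPQ) u).mono (faceOf_subset_capOf hQ hPne hPQ)

theorem faceIfTouching_nonempty (hQ : IsCompact Q) (hQne : Q.Nonempty) :
    (faceIfTouching P Q u).Nonempty := by
  unfold faceIfTouching
  split_ifs
  exacts [faceOf_nonempty hQ hQne u, hQne]

end Caps

theorem setDim_eq_finrank_vectorSpan {V : Type*} [AddCommGroup V] [Module ℝ V] (s : Set V) :
    setDim s = Module.finrank ℝ (vectorSpan ℝ s) := by
  rw [setDim, direction_affineSpan]

theorem isEssential_congr_of_vectorSpan_eq {n : ℕ} {ι : Type*} [Fintype ι]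
    {K K' : ι → Set (E n)}
    (hK : ∀ i, (K i).Nonempty) (hK' : ∀ i, (K' i).Nonempty)
    (hspan : ∀ i, vectorSpan ℝ (K i) = vectorSpan ℝ (K' i)) :
    IsEssential K ↔ IsEssential K' := by
  refine forall_congr' fun I => ?_
  have hsum : vectorSpan ℝ (∑ i ∈ I, K i) = vectorSpan ℝ (∑ i ∈ I, K' i) := by
    simp only [vectorSpan_finset_sum I fun i _ => hK i, vectorSpan_finset_sum I fun i _ => hK' i,
      hspan]
  rw [setDim_eq_finrank_vectorSpan, setDim_eq_finrank_vectorSpan, hsum]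

/-- Equivalence of the two essentiality conditions in the two criteria for strict
monotonicity: existence of a nonzero `u` with `{B 1 u, …, B n u}` essential is equivalent
to existence of a unit vector `u` such that the collection consisting of `(Q i)^u` for
`i ∈ T u` (the touching indices) and `Q i` for `i ∉ T u` is essential. -/
theorem B_essential_iff_face_essential {n : ℕ} (P Q : Fin n → Set (E n))
    (hP : ∀ i, IsPolytope (P i)) (hQ : ∀ i, IsPolytope (Q i))
    (hPQ : ∀ i, P i ⊆ Q i) :
    (∃ u : E n, u ≠ 0 ∧
        IsEssential (fun i : Fin n => {x ∈ Q i | suppFn (P i) u ≤ ⟪u, x⟫})) ↔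
      (∃ u : E n, ‖u‖ = 1 ∧
        IsEssential (fun i : Fin n =>
          if (P i ∩ faceOf (Q i) u).Nonempty then faceOf (Q i) u else Q i)) := by
  have hcap : ∀ u, IsEssential (fun i => capOf (P i) (Q i) u) ↔
      IsEssential (fun i => faceIfTouching (P i) (Q i) u) := fun u =>
    isEssential_congr_of_vectorSpan_eq
      (fun i => capOf_nonempty (hQ i).isCompact (hP i).nonempty (hPQ i))
      (fun i => faceIfTouching_nonempty (hQ i).isCompact (hQ i).nonempty)
      (fun i => vectorSpan_capOf (hP i).isCompact (hP i).nonempty (hQ i).isCompact (hQ i).convex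
        (hPQ i))
  constructor
  · rintro ⟨u, hu, hess⟩
    refine ⟨‖u‖⁻¹ • u, norm_smul_inv_norm hu, (hcap _).1 ?_⟩
    simp only [capOf_smul _ _ u (inv_pos.2 (norm_pos_iff.2 hu))]
    exact hess
  · rintro ⟨u, hu, hess⟩
    exact ⟨u, by rintro rfl; simp at hu, (hcap u).2 hess⟩
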